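/- Let x > 0 and 0 < y < π/2. Then C := x·(sinh²x·cos²y − cosh²x·sin²y) + 2y·sinh(x)·cosh(x)·sin(y)·cos(y) − sinh(x)·cosh(x)·(sinh²x + sin²y) is strictly negative. -/
import Mathlib

open Real

lemma sinh_lt_mul_cosh {x : ℝ} (hx : 0 < x) : Real.sinh x < x * Real.cosh x := by
  have key : StrictMonoOn (fun t : ℝ => t * Real.cosh t - Real.sinh t) (Set.Ici 0) := by
    apply strictMonoOn_of_deriv_pos (convex_Ici 0)
    · exact ((continuous_id.mul Real.continuous_cosh).sub Real.continuous_sinh).continuousOn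
    · intro t ht
      rw [interior_Ici] at ht
      have h : HasDerivAt (fun t : ℝ => t * Real.cosh t - Real.sinh t)
          (1 * Real.cosh t + t * Real.sinh t - Real.cosh t) t :=
        ((hasDerivAt_id t).mul (Real.hasDerivAt_cosh t)).sub (Real.hasDerivAt_sinh t)
      rw [h.deriv]
      have h0 : (0:ℝ) < t := ht
      have := Real.sinh_pos_iff.2 h0
      nlinarith [mul_pos h0 this]
  have := key (Set.self_mem_Ici) (Set.mem_Ici.2 hx.le) hx
  simpa using this

/-- The quantity `C` of (6.40) is strictly negative for `x > 0`, `0 < y < π/2`. -/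
theorem C_neg (x y : ℝ) (hx : 0 < x) (hy₀ : 0 < y) (hy₁ : y < π / 2) :
    x * (Real.sinh x ^ 2 * Real.cos y ^ 2 - Real.cosh x ^ 2 * Real.sin y ^ 2)
      + 2 * y * Real.sinh x * Real.cosh x * Real.sin y * Real.cos y
      - Real.sinh x * Real.cosh x * (Real.sinh x ^ 2 + Real.sin y ^ 2) < 0 := by
  have hs : x < Real.sinh x := Real.self_lt_sinh_iff.2 hx
  have hc : 1 < Real.cosh x := Real.one_lt_cosh.2 (ne_of_gt hx)
  have hxc : Real.sinh x < x * Real.cosh x := sinh_lt_mul_cosh hx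
  have hcy : 0 < Real.cos y := Real.cos_pos_of_mem_Ioo ⟨by linarith [Real.pi_pos], hy₁⟩
  have hsy : 0 < Real.sin y := Real.sin_pos_of_pos_of_lt_pi hy₀ (by linarith [Real.pi_pos])
  have htan : y < Real.tan y := Real.lt_tan hy₀ hy₁
  have hys : y * Real.cos y < Real.sin y := by
    rw [Real.tan_eq_sin_div_cos] at htan
    calc y * Real.cos y < (Real.sin y / Real.cos y) * Real.cos y := by
          exact mul_lt_mul_of_pos_right htan hcy
      _ = Real.sin y := by field_simp
  have hcy1 : Real.cos y ^ 2 ≤ 1 := by nlinarith [Real.sin_sq_add_cos_sq y]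
  -- x * cos²y < sinh x * cosh x
  have h1 : x * Real.cos y ^ 2 < Real.sinh x * Real.cosh x := by nlinarith
  -- x * cosh²x * sin²y > y * sinh x * cosh x * sin y * cos y
  have hspos : 0 < Real.sinh x := lt_trans hx hs
  have hcpos : 0 < Real.cosh x := lt_trans one_pos hc
  have key : Real.sinh x * (y * Real.cos y) < x * Real.cosh x * Real.sin y := by
    calc Real.sinh x * (y * Real.cos y) < Real.sinh x * Real.sin y :=
          mul_lt_mul_of_pos_left hys hspos
      _ < x * Real.cosh x * Real.sin y := mul_lt_mul_of_pos_right hxc hsy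
  have h2 : y * Real.sinh x * Real.cosh x * Real.sin y * Real.cos y
      < x * Real.cosh x ^ 2 * Real.sin y ^ 2 := by
    nlinarith [mul_lt_mul_of_pos_right key (mul_pos hcpos hsy)]
  have h3 : y * Real.sinh x * Real.cosh x * Real.sin y * Real.cos y
      < Real.sinh x * Real.cosh x * Real.sin y ^ 2 := by
    nlinarith [mul_lt_mul_of_pos_left hys (mul_pos (mul_pos hspos hcpos) hsy)]
  nlinarith [mul_lt_mul_of_pos_left h1 (mul_pos hspos hspos)]
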